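/- Let f : 𝔽₂^n → 𝔽₂ be a Boolean function with nonquadraticity χ(f). Then there exists a pure n-qubit stabilizer state φ with |⟨φ|Ψ_f⟩|² ≥ (1 − 2^{1−n}χ(f))². Consequently, if χ(f) < 2^{n−1}, then 𝔇_min(Ψ_f) ≤ −2 log₂(1 − 2^{1−n}χ(f)). -/

import Mathlib

open scoped ComplexOrder

namespace Magic

abbrev QIdx (n : ℕ) := Fin n → ZMod 2
abbrev QVec (n : ℕ) := QIdx n → ℂ
abbrev QMat (n : ℕ) := Matrix (QIdx n) (QIdx n) ℂ

/-- The four single-qubit Pauli matrices `I, X, Y, Z`. -/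
noncomputable def pauli1 (k : Fin 4) : Matrix (ZMod 2) (ZMod 2) ℂ :=
  Matrix.of fun i j =>
    if k = 0 then (if i = j then 1 else 0)
    else if k = 1 then (if i = j then 0 else 1)
    else if k = 2 then
      (if i = 0 ∧ j = 1 then -Complex.I else if i = 1 ∧ j = 0 then Complex.I else 0)
    else (if i = j then (if i = 0 then 1 else -1) else 0)

/-- Tensor product `σ_1 ⊗ ⋯ ⊗ σ_n` of single-qubit Pauli matrices. -/
noncomputable def pauliOp {n : ℕ} (σ : Fin n → Fin 4) : QMat n :=
  Matrix.of fun x y => ∏ k, pauli1 (σ k) (x k) (y k)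

/-- The `n`-qubit Pauli group: operators `i^a · (σ_1 ⊗ ⋯ ⊗ σ_n)`. -/
def PauliGroup (n : ℕ) : Set (QMat n) :=
  { M | ∃ (a : Fin 4) (σ : Fin n → Fin 4), M = Complex.I ^ (a : ℕ) • pauliOp σ }

/-- `G` is an abelian subgroup of the `n`-qubit Pauli group of order `2^n`
not containing `-I`. -/
structure IsStabGroup {n : ℕ} (G : Finset (QMat n)) : Prop where
  subset : ↑G ⊆ PauliGroup n
  one_mem : (1 : QMat n) ∈ G
  mul_mem : ∀ A ∈ G, ∀ B ∈ G, A * B ∈ G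
  comm : ∀ A ∈ G, ∀ B ∈ G, A * B = B * A
  card_eq : G.card = 2 ^ n
  neg_one_not_mem : (-1 : QMat n) ∉ G

/-- A pure `n`-qubit stabilizer state: a unit vector which is a common
`+1`-eigenvector of an abelian subgroup of the Pauli group of order `2^n`
not containing `-I`. -/
def IsStabState {n : ℕ} (v : QVec n) : Prop :=
  (∑ x, Complex.normSq (v x)) = 1 ∧
  ∃ G : Finset (QMat n), IsStabGroup G ∧ ∀ A ∈ G, A.mulVec v = v

/-- The rank-one projector `|v⟩⟨v|`. -/
noncomputable def stabProj {n : ℕ} (v : QVec n) : QMat n :=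
  Matrix.vecMulVec v (star v)

/-- `STAB`: the convex hull of the rank-one projectors onto pure stabilizer states. -/
noncomputable def STAB (n : ℕ) : Set (QMat n) :=
  convexHull ℝ { P | ∃ v : QVec n, IsStabState v ∧ P = stabProj v }

/-- A density matrix: positive semidefinite with unit trace. -/
def IsDensityMatrix {n : ℕ} (ρ : QMat n) : Prop :=
  ρ.PosSemidef ∧ ρ.trace = 1

/-- The set of squared overlaps of `ψ` with pure stabilizer states. -/
noncomputable def stabOverlapSet {n : ℕ} (ψ : QVec n) : Set ℝ :=
  { t | ∃ φ : QVec n, IsStabState φ ∧ t = ‖∑ x, (starRingEnd ℂ) (φ x) * ψ x‖ ^ 2 }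

/-- Min-relative entropy of magic of a pure state:
`𝔇_min(ψ) = −log₂ max_φ |⟨φ|ψ⟩|²`, maximum over pure stabilizer states. -/
noncomputable def DminPure {n : ℕ} (ψ : QVec n) : ℝ :=
  - Real.logb 2 (sSup (stabOverlapSet ψ))

/-- Free robustness of magic. -/
noncomputable def Rfree {n : ℕ} (ρ : QMat n) : ℝ :=
  sInf { s : ℝ | 0 ≤ s ∧ ∃ σ ∈ STAB n, ∃ σ' ∈ STAB n, ρ = (1 + s) • σ - s • σ' }

/-- Log-free robustness of magic. -/
noncomputable def LRmagic {n : ℕ} (ρ : QMat n) : ℝ :=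
  Real.logb 2 (1 + Rfree ρ)

/-- Boolean functions on `𝔽₂^n`. -/
abbrev BF (n : ℕ) := QIdx n → ZMod 2

/-- The hypergraph state `|Ψ_f⟩ = 2^{−n/2} ∑_x (−1)^{f(x)} |x⟩`. -/
noncomputable def hstate {n : ℕ} (f : BF n) : QVec n :=
  fun x => (Complex.ofReal (Real.sqrt ((2 : ℝ) ^ n)))⁻¹ * (-1 : ℂ) ^ ((f x).val)

/-- The Hamming weight of a Boolean function. -/
def wt {n : ℕ} (f : BF n) : ℕ := (Finset.univ.filter fun x => f x = 1).card

/-- A Boolean function of algebraic degree at most 2: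
`q(x) = ∑_{i<j} a_{ij} x_i x_j + ∑_i b_i x_i + c` over `𝔽₂`. -/
def IsQuadratic {n : ℕ} (q : BF n) : Prop :=
  ∃ (a : Fin n → Fin n → ZMod 2) (b : Fin n → ZMod 2) (c : ZMod 2),
    ∀ x, q x = (∑ i, ∑ j, if i < j then a i j * x i * x j else 0)
      + (∑ i, b i * x i) + c

/-- The nonquadraticity (second-order nonlinearity) of a Boolean function:
`χ(f) = min { wt(f+q) : q quadratic }`. -/
noncomputable def nonquad {n : ℕ} (f : BF n) : ℕ :=
  sInf { w : ℕ | ∃ q : BF n, IsQuadratic q ∧ w = wt (fun x => f x + q x) }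


/-!
Let `q` be a quadratic function with `wt (f + q) = χ(f)`. Then
`⟨Ψ_q|Ψ_f⟩ = 2^{-n} ∑ₓ (-1)^{(f+q)(x)} = 1 - 2^{1-n} wt (f + q)`,
so it suffices that `Ψ_q` is a stabilizer state. It is stabilized by the `2^n` commuting
signed shifts `|x⟩ ↦ (-1)^{q(x) + q(x+s)} |x + s⟩`, and these are Pauli operators because the
derivative `x ↦ q(x) + q(x+s)` of a quadratic function is affine.
-/

section Signs

variable {R : Type*} [CommRing R]

theorem prod_neg_one_pow_val {ι : Type*} (s : Finset ι) (u : ι → ZMod 2) :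
    ∏ i ∈ s, (-1 : R) ^ (u i).val = (-1) ^ (∑ i ∈ s, u i).val := by
  rw [Finset.prod_pow_eq_pow_sum, neg_one_pow_eq_pow_mod_two, ← ZMod.val_natCast, Nat.cast_sum]
  simp only [ZMod.natCast_val, ZMod.cast_id', id]

theorem neg_one_pow_val_add (u v : ZMod 2) :
    (-1 : R) ^ (u + v).val = (-1) ^ u.val * (-1) ^ v.val := by
  simpa using (prod_neg_one_pow_val (R := R) Finset.univ ![u, v]).symm

theorem neg_one_pow_val_eq_one_sub (u : ZMod 2) :
    (-1 : R) ^ u.val = 1 - 2 * if u = 1 then 1 else 0 := by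
  obtain rfl | rfl : u = 0 ∨ u = 1 := by decide +revert
  · simp
  · norm_num [ZMod.val_one]

theorem sum_neg_one_pow_val {n : ℕ} (h : BF n) :
    ∑ x, (-1 : R) ^ (h x).val = 2 ^ n - 2 * wt h := by
  simp only [neg_one_pow_val_eq_one_sub, Finset.sum_sub_distrib, ← Finset.mul_sum,
    Finset.sum_boole, Finset.sum_const, Finset.card_univ, Fintype.card_fun, ZMod.card,
    Fintype.card_fin, wt]
  simp

end Signs

section Overlap

variable {n : ℕ}

theorem star_hstate_mul_hstate (f g : BF n) (x : QIdx n) :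
    starRingEnd ℂ (hstate g x) * hstate f x = (2 ^ n)⁻¹ * (-1) ^ (f x + g x).val := by
  have hsqrt : (Real.sqrt ((2 : ℝ) ^ n) : ℂ) * Real.sqrt ((2 : ℝ) ^ n) = 2 ^ n := by
    rw [← Complex.ofReal_mul, Real.mul_self_sqrt (by positivity)]; push_cast; rfl
  simp only [hstate, map_mul, map_inv₀, Complex.conj_ofReal, map_pow, map_neg, map_one,
    neg_one_pow_val_add, ← hsqrt, mul_inv]
  ring

theorem inner_hstate (f g : BF n) :
    ∑ x, starRingEnd ℂ (hstate g x) * hstate f x = 1 - 2 * wt (fun x => f x + g x) / 2 ^ n := by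
  have hsum := sum_neg_one_pow_val (R := ℂ) fun x => f x + g x
  simp only [star_hstate_mul_hstate, ← Finset.mul_sum, hsum]
  field_simp

theorem norm_inner_hstate_sq (f g : BF n) :
    ‖∑ x, starRingEnd ℂ (hstate g x) * hstate f x‖ ^ 2
      = (1 - 2 * (wt (fun x => f x + g x) : ℝ) / 2 ^ n) ^ 2 := by
  have hreal : (1 - 2 * (wt (fun x => f x + g x) : ℂ) / 2 ^ n)
      = ((1 - 2 * (wt (fun x => f x + g x) : ℝ) / 2 ^ n : ℝ) : ℂ) := by
    push_cast; rfl
  rw [inner_hstate, hreal, Complex.norm_real, Real.norm_eq_abs, sq_abs]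

theorem sum_normSq_hstate (f : BF n) : ∑ x, Complex.normSq (hstate f x) = 1 := by
  have hwt : wt (fun x => f x + f x) = 0 := by simp [wt, CharTwo.add_self_eq_zero]
  apply Complex.ofReal_injective
  push_cast [Complex.normSq_eq_conj_mul_self]
  simp [inner_hstate, hwt]

end Overlap

theorem norm_sum_conj_mul_sq_le {ι : Type*} [Fintype ι] (φ ψ : ι → ℂ) :
    ‖∑ x, starRingEnd ℂ (φ x) * ψ x‖ ^ 2
      ≤ (∑ x, Complex.normSq (φ x)) * ∑ x, Complex.normSq (ψ x) := by
  calc ‖∑ x, starRingEnd ℂ (φ x) * ψ x‖ ^ 2 ≤ (∑ x, ‖φ x‖ * ‖ψ x‖) ^ 2 := by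
        gcongr
        exact norm_sum_le_of_le _ fun x _ => by simp
    _ ≤ (∑ x, ‖φ x‖ ^ 2) * ∑ x, ‖ψ x‖ ^ 2 := Finset.sum_mul_sq_le_sq_mul_sq _ _ _
    _ = _ := by simp only [Complex.sq_norm]

theorem DminPure_le_neg_logb_of_mem {n : ℕ} {ψ : QVec n} (hψ : ∑ x, Complex.normSq (ψ x) = 1)
    {t : ℝ} (ht : t ∈ stabOverlapSet ψ) (htpos : 0 < t) : DminPure ψ ≤ -Real.logb 2 t := by
  have hbdd : BddAbove (stabOverlapSet ψ) := by
    refine ⟨1, ?_⟩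
    rintro _ ⟨φ, hφ, rfl⟩
    simpa [hφ.1, hψ] using norm_sum_conj_mul_sq_le φ ψ
  exact neg_le_neg (Real.logb_le_logb_of_le one_lt_two htpos (le_csSup hbdd ht))

theorem exists_isQuadratic_wt_eq_nonquad {n : ℕ} (f : BF n) :
    ∃ q, IsQuadratic q ∧ wt (fun x => f x + q x) = nonquad f := by
  have hzero : IsQuadratic (0 : BF n) := ⟨0, 0, 0, fun x => by simp⟩
  obtain ⟨q, hq, hwt⟩ :
      nonquad f ∈ {w | ∃ q : BF n, IsQuadratic q ∧ w = wt fun x => f x + q x} :=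
    Nat.sInf_mem ⟨_, 0, hzero, rfl⟩
  exact ⟨q, hq, hwt.symm⟩

def affineBF (n : ℕ) : Submodule (ZMod 2) (BF n) where
  carrier := {g | ∃ (c : QIdx n) (d : ZMod 2), ∀ x, g x = ∑ k, c k * x k + d}
  add_mem' := by
    rintro g h ⟨c, d, hg⟩ ⟨c', d', hh⟩
    refine ⟨c + c', d + d', fun x => ?_⟩
    simp only [Pi.add_apply, hg, hh, add_mul, Finset.sum_add_distrib]
    ring
  zero_mem' := ⟨0, 0, by simp⟩
  smul_mem' := by
    rintro a g ⟨c, d, hg⟩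
    refine ⟨a • c, a * d, fun x => ?_⟩
    simp only [Pi.smul_apply, smul_eq_mul, hg, mul_add, Finset.mul_sum, mul_assoc]

namespace affineBF

variable {n : ℕ}

theorem const_mem (d : ZMod 2) : (fun _ => d : BF n) ∈ affineBF n := ⟨0, d, by simp⟩

theorem apply_mem (i : Fin n) : (fun x => x i : BF n) ∈ affineBF n :=
  ⟨Pi.single i 1, 0, fun x => by simp [Pi.single_apply]⟩

end affineBF

theorem IsQuadratic.add_comp_add_mem_affineBF {n : ℕ} {q : BF n} (hq : IsQuadratic q)
    (s : QIdx n) : (fun x => q x + q (x + s)) ∈ affineBF n := by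
  obtain ⟨a, b, c, hq⟩ := hq
  have hdiff : (fun x => q x + q (x + s)) = (∑ i, ∑ j, if i < j then
      a i j • (s j • (fun x => x i) + s i • (fun x => x j) + fun _ => s i * s j) else 0)
      + fun _ => ∑ i, b i * s i := by
    funext x
    have hregroup : ∀ A B A' B' c : ZMod 2, A + B + c + (A' + B' + c) = (A + A') + (B + B') := by
      intros; grind
    simp only [hq, Pi.add_apply, Finset.sum_apply, ite_apply, Pi.smul_apply, smul_eq_mul,
      Pi.zero_apply]
    rw [hregroup, ← Finset.sum_add_distrib, ← Finset.sum_add_distrib]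
    congr 1
    · refine Finset.sum_congr rfl fun i _ => ?_
      rw [← Finset.sum_add_distrib]
      refine Finset.sum_congr rfl fun j _ => ?_
      split_ifs <;> grind
    · refine Finset.sum_congr rfl fun i _ => ?_
      grind
  rw [hdiff]
  refine add_mem (Submodule.sum_mem _ fun i _ => Submodule.sum_mem _ fun j _ => ?_)
    (affineBF.const_mem _)
  split_ifs
  · exact Submodule.smul_mem _ _ <| add_mem
      (add_mem (Submodule.smul_mem _ _ (affineBF.apply_mem i))
        (Submodule.smul_mem _ _ (affineBF.apply_mem j)))
      (affineBF.const_mem _)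
  · exact zero_mem _

-- `pauliIndex s c` indexes the Pauli matrix `(-i)^(s c) Z^c X^s`, using `Y = -i Z X`.
def pauliIndex (s c : ZMod 2) : Fin 4 :=
  if s = 0 then (if c = 0 then 0 else 3) else (if c = 0 then 1 else 2)

theorem pauli1_pauliIndex_apply (s c x y : ZMod 2) :
    pauli1 (pauliIndex s c) x y
      = (if y = x + s then 1 else 0) * ((-Complex.I) ^ (s.val * c.val) * (-1) ^ (c * x).val) := by
  have h01 : ∀ u : ZMod 2, u = 0 ∨ u = 1 := by decide
  rcases h01 s with rfl | rfl <;> rcases h01 c with rfl | rfl <;>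
    rcases h01 x with rfl | rfl <;> rcases h01 y with rfl | rfl <;>
    simp [pauliIndex, pauli1, ZMod.val_one, show (1 : ZMod 2) + 1 = 0 by decide]

theorem pauliOp_pauliIndex_apply {n : ℕ} (s c x y : QIdx n) :
    pauliOp (fun k => pauliIndex (s k) (c k)) x y
      = (if y = x + s then 1 else 0)
        * ((-Complex.I) ^ (∑ k, (s k).val * (c k).val) * (-1) ^ (∑ k, c k * x k).val) := by
  simp only [pauliOp, Matrix.of_apply, pauli1_pauliIndex_apply, Finset.prod_mul_distrib,
    prod_neg_one_pow_val]
  simp only [Finset.prod_pow_eq_pow_sum, Finset.prod_boole, funext_iff, Finset.mem_univ,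
    true_implies, Pi.add_apply]

def signShift {n : ℕ} (s : QIdx n) (g : BF n) : QMat n :=
  Matrix.of fun x y => if y = x + s then (-1 : ℂ) ^ (g x).val else 0

section SignShift

variable {n : ℕ}

theorem signShift_mulVec (s : QIdx n) (g : BF n) (v : QVec n) :
    (signShift s g).mulVec v = fun x => (-1) ^ (g x).val * v (x + s) := by
  funext x
  simp [signShift, Matrix.mulVec, dotProduct]

theorem signShift_mul (s t : QIdx n) (g h : BF n) :
    signShift s g * signShift t h = signShift (s + t) fun x => g x + h (x + s) := by
  ext x y
  simp only [signShift, Matrix.mul_apply, Matrix.of_apply, ite_mul, zero_mul, Finset.sum_ite_eq',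
    Finset.mem_univ, if_true]
  rw [add_assoc, mul_ite, mul_zero, neg_one_pow_val_add]

theorem signShift_zero : signShift (0 : QIdx n) 0 = 1 := by
  ext x y
  simp [signShift, Matrix.one_apply, eq_comm]

theorem signShift_mem_pauliGroup (s : QIdx n) {g : BF n} (hg : g ∈ affineBF n) :
    signShift s g ∈ PauliGroup n := by
  obtain ⟨c, d, hg⟩ := hg
  set m := ∑ k, (s k).val * (c k).val
  -- `i ^ m` cancels the phase `(-i) ^ m` of the Pauli string, and `i ^ (2 d) = (-1) ^ d`.
  refine ⟨Fin.ofNat 4 (2 * d.val + m), fun k => pauliIndex (s k) (c k), ?_⟩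
  have hcancel : Complex.I ^ m * (-Complex.I) ^ m = 1 := by rw [← mul_pow]; simp
  ext x y
  rw [Matrix.smul_apply, pauliOp_pauliIndex_apply, Fin.val_ofNat, ← Complex.I_pow_eq_pow_mod,
    smul_eq_mul, signShift, Matrix.of_apply, hg, neg_one_pow_val_add, pow_add, pow_mul,
    Complex.I_sq]
  split_ifs
  · linear_combination -(-1 : ℂ) ^ d.val * (-1) ^ (∑ k, c k * x k).val * hcancel
  · simp

end SignShift

theorem isStabGroup_image {n : ℕ} {K : QIdx n → QMat n} (hpauli : ∀ s, K s ∈ PauliGroup n)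
    (hzero : K 0 = 1) (hadd : ∀ s t, K (s + t) = K s * K t) (hinj : Function.Injective K)
    (hneg : ∀ s, K s ≠ -1) : IsStabGroup (Finset.univ.image K) where
  subset := by
    simpa only [Finset.coe_image, Finset.coe_univ, Set.image_univ] using
      Set.range_subset_iff.2 hpauli
  one_mem := Finset.mem_image.2 ⟨0, Finset.mem_univ _, hzero⟩
  mul_mem := by
    simp only [Finset.mem_image, Finset.mem_univ, true_and, forall_exists_index,
      forall_apply_eq_imp_iff]
    exact fun s t => ⟨s + t, hadd s t⟩
  comm := by
    simp only [Finset.mem_image, Finset.mem_univ, true_and, forall_exists_index,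
      forall_apply_eq_imp_iff]
    exact fun s t => by rw [← hadd, ← hadd, add_comm]
  card_eq := by simp [Finset.card_image_of_injective _ hinj]
  neg_one_not_mem := by simpa using hneg

-- The stabilizers of `hstate q`: conjugates of the shifts `X^s` by the diagonal sign `(-1)^q`.
def hstab {n : ℕ} (q : BF n) (s : QIdx n) : QMat n :=
  signShift s fun x => q x + q (x + s)

section HStab

variable {n : ℕ} (q : BF n)

theorem hstab_zero : hstab q 0 = 1 := by
  simp [hstab, CharTwo.add_self_eq_zero, ← Pi.zero_def, signShift_zero]

theorem hstab_add (s t : QIdx n) : hstab q (s + t) = hstab q s * hstab q t := by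
  rw [hstab, hstab, hstab, signShift_mul]
  congr 1
  funext x
  rw [← add_assoc]
  grind

theorem hstab_injective : Function.Injective (hstab q) := by
  intro s t hst
  by_contra hne
  have := congrFun (congrFun hst 0) s
  simp [hstab, signShift, hne] at this

theorem hstab_ne_neg_one (s : QIdx n) : hstab q s ≠ -1 := by
  intro h
  have := congrFun (congrFun h 0) 0
  by_cases hs : s = 0
  · subst hs
    norm_num [hstab_zero] at this
  · simp [hstab, signShift, Ne.symm hs] at this

theorem hstab_mulVec_hstate (s : QIdx n) : (hstab q s).mulVec (hstate q) = hstate q := by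
  funext x
  simp only [hstab, signShift_mulVec, hstate]
  rw [mul_left_comm, ← neg_one_pow_val_add]
  congr 3
  grind

end HStab

theorem IsQuadratic.hstab_mem_pauliGroup {n : ℕ} {q : BF n} (hq : IsQuadratic q) (s : QIdx n) :
    hstab q s ∈ PauliGroup n :=
  signShift_mem_pauliGroup s (hq.add_comp_add_mem_affineBF s)

theorem IsQuadratic.isStabState_hstate {n : ℕ} {q : BF n} (hq : IsQuadratic q) :
    IsStabState (hstate q) := by
  refine ⟨sum_normSq_hstate q, _, isStabGroup_image hq.hstab_mem_pauliGroup (hstab_zero q)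
    (hstab_add q) (hstab_injective q) (hstab_ne_neg_one q), ?_⟩
  simp [hstab_mulVec_hstate]

theorem two_mul_lt_two_pow_of_lt_two_pow_pred {k n : ℕ} (h : k < 2 ^ (n - 1)) :
    2 * k < 2 ^ n := by
  rcases n with _ | n
  · simp_all
  · rw [Nat.add_sub_cancel] at h
    rw [pow_succ]
    omega

theorem nonquad_overlap_bound_general (n : ℕ) (f : BF n) :
    (∃ φ : QVec n, IsStabState φ ∧
      ‖∑ x, (starRingEnd ℂ) (φ x) * hstate f x‖ ^ 2 ≥
        (1 - 2 * (nonquad f : ℝ) / 2 ^ n) ^ 2) ∧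
    ((nonquad f : ℝ) < 2 ^ (n - 1) →
      DminPure (hstate f) ≤ -2 * Real.logb 2 (1 - 2 * (nonquad f : ℝ) / 2 ^ n)) := by
  obtain ⟨q, hq, hwt⟩ := exists_isQuadratic_wt_eq_nonquad f
  set r : ℝ := 1 - 2 * (nonquad f : ℝ) / 2 ^ n
  have hoverlap : ‖∑ x, (starRingEnd ℂ) (hstate q x) * hstate f x‖ ^ 2 = r ^ 2 := by
    rw [norm_inner_hstate_sq, hwt]
  refine ⟨⟨hstate q, hq.isStabState_hstate, hoverlap.ge⟩, fun hχ => ?_⟩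
  have hr : 0 < r := by
    have h2χ : 2 * nonquad f < 2 ^ n :=
      two_mul_lt_two_pow_of_lt_two_pow_pred (by exact_mod_cast hχ)
    rw [sub_pos, div_lt_one (by positivity)]
    exact_mod_cast h2χ
  calc DminPure (hstate f) ≤ -Real.logb 2 (r ^ 2) :=
        DminPure_le_neg_logb_of_mem (sum_normSq_hstate f) ⟨hstate q, hq.isStabState_hstate,
          hoverlap.symm⟩ (by positivity)
    _ = -2 * Real.logb 2 r := by rw [Real.logb_pow]; push_cast; ring

/-- For a Boolean function `f` with nonquadraticity `χ(f)`,
there is a pure stabilizer state `φ` with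
`|⟨φ|Ψ_f⟩|² ≥ (1 − 2^{1−n} χ(f))²`; consequently, if `χ(f) < 2^{n−1}` then
`𝔇_min(Ψ_f) ≤ −2 log₂(1 − 2^{1−n} χ(f))`. -/
theorem nonquad_overlap_bound (n : ℕ) (hn : 1 ≤ n) (f : BF n) :
    (∃ φ : QVec n, IsStabState φ ∧
      ‖∑ x, (starRingEnd ℂ) (φ x) * hstate f x‖ ^ 2 ≥
        (1 - 2 * (nonquad f : ℝ) / 2 ^ n) ^ 2) ∧
    ((nonquad f : ℝ) < 2 ^ (n - 1) →
      DminPure (hstate f) ≤ -2 * Real.logb 2 (1 - 2 * (nonquad f : ℝ) / 2 ^ n)) :=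
  nonquad_overlap_bound_general n f

end Magic
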